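/- arXiv:1211.2606 — 3 statements merged into one kernel-verified Lean document; each statement's English description precedes it below -/
import Mathlib

section
/- Any two lattices in ℝ^d of the same covolume are bounded displacement equivalent: there is a bijection between them moving each point by a uniformly bounded distance. -/
/-!
Tile `ℝ^d` by the translates of a bounded fundamental domain `F₁` of `L₁` and of a bounded
fundamental domain `F₂` of `L₂`, of equal volume. The tiles of `L₁` at a finite set `s ⊆ L₁` are
disjoint, and are covered by the tiles of `L₂` that meet them, whose base points lie within a
fixed distance of `s` because both tiles are bounded; comparing volumes gives Hall's condition,
hence an injection `L₁ → L₂` of bounded displacement. By symmetry there is one `L₂ → L₁` as well,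
and the Schröder–Bernstein construction glues the two into a bijection that moves each point by
at most the larger of the two bounds.
-/

open MeasureTheory Set Function Pointwise Bornology Module
open scoped ENNReal

theorem card_le_card_of_pairwiseDisjoint_of_iUnion_eq_univ {G ι κ : Type*} [AddGroup G]
    [MeasurableSpace G] [MeasurableAdd G] (μ : Measure G) [μ.IsAddLeftInvariant]
    {p : ι → G} {q : κ → G} {F₁ F₂ : Set G} (hF₁ : MeasurableSet F₁) (hF₁₀ : μ F₁ ≠ 0)
    (hF₁_top : μ F₁ ≠ ∞) (hF : μ F₂ ≤ μ F₁)
    (hdisj : Pairwise (Disjoint on fun i ↦ p i +ᵥ F₁)) (hcover : ⋃ j, q j +ᵥ F₂ = univ)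
    {s : Finset ι} {t : Finset κ}
    (hst : ∀ i ∈ s, ∀ j, ((p i +ᵥ F₁) ∩ (q j +ᵥ F₂)).Nonempty → j ∈ t) :
    s.card ≤ t.card := by
  have hsub : ⋃ i ∈ s, p i +ᵥ F₁ ⊆ ⋃ j ∈ t, q j +ᵥ F₂ := iUnion₂_subset fun i hi x hx ↦ by
    obtain ⟨j, hj⟩ := mem_iUnion.1 (hcover ▸ mem_univ x)
    exact mem_biUnion (hst i hi j ⟨x, hx, hj⟩) hj
  have key : (s.card : ℝ≥0∞) * μ F₁ ≤ t.card * μ F₁ := calc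
    _ = μ (⋃ i ∈ s, p i +ᵥ F₁) := by
        rw [measure_biUnion_finset (hdisj.set_pairwise _) fun i _ ↦ hF₁.const_vadd _]
        simp [measure_vadd]
    _ ≤ μ (⋃ j ∈ t, q j +ᵥ F₂) := measure_mono hsub
    _ ≤ ∑ j ∈ t, μ (q j +ᵥ F₂) := measure_biUnion_finset_le _ _
    _ ≤ t.card * μ F₁ := by simpa [measure_vadd] using mul_le_mul_right hF _
  exact_mod_cast (ENNReal.mul_le_mul_iff_left hF₁₀ hF₁_top).1 key

theorem Submodule.finite_preimage_coe_of_isBounded {E : Type*} [NormedAddCommGroup E]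
    [ProperSpace E] (L : Submodule ℤ E) [DiscreteTopology L] {s : Set E} (hs : IsBounded s) :
    (((↑) : L → E) ⁻¹' s).Finite := by
  have : DiscreteTopology L.toAddSubgroup := ‹DiscreteTopology L›
  have : (s ∩ L).Finite := Metric.finite_isBounded_inter_isClosed DiscreteTopology.isDiscrete hs
    L.toAddSubgroup.isClosed_of_discrete
  exact this.preimage_embedding (Embedding.subtype _) |>.subset fun y hy ↦ ⟨hy, y.2⟩

namespace ZLattice

variable {E : Type*} [NormedAddCommGroup E] [NormedSpace ℝ E] [FiniteDimensional ℝ E]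
  [MeasurableSpace E] [BorelSpace E] (μ : Measure E) [μ.IsAddHaarMeasure]

theorem exists_isBounded_tile (L : Submodule ℤ E) [DiscreteTopology L] [IsZLattice ℝ L] :
    ∃ F : Set E, MeasurableSet F ∧ IsBounded F ∧ μ.real F = covolume L μ ∧
      Pairwise (Disjoint on fun v : L ↦ (v : E) +ᵥ F) ∧ ⋃ v : L, (v : E) +ᵥ F = univ := by
  let b := Free.chooseBasis ℤ L
  have hunique (x : E) : ∃! v : L, v +ᵥ x ∈ ZSpan.fundamentalDomain (b.ofZLatticeBasis ℝ) := by
    have := ZSpan.exist_unique_vadd_mem_fundamentalDomain (b.ofZLatticeBasis ℝ) x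
    rwa [b.ofZLatticeBasis_span ℝ] at this
  have mem_vadd_iff {v : L} {x : E} :
      x ∈ (v : E) +ᵥ ZSpan.fundamentalDomain (b.ofZLatticeBasis ℝ) ↔
        -v +ᵥ x ∈ ZSpan.fundamentalDomain (b.ofZLatticeBasis ℝ) := by
    rw [mem_vadd_set_iff_neg_vadd_mem]; rfl
  refine ⟨_, ZSpan.fundamentalDomain_measurableSet _, ZSpan.fundamentalDomain_isBounded _,
    (covolume_eq_measure_fundamentalDomain L μ (isAddFundamentalDomain b μ)).symm,
    fun v w hvw ↦ disjoint_left.2 fun x hv hw ↦ hvw ?_, eq_univ_of_forall fun x ↦ ?_⟩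
  · exact neg_inj.1 <| (hunique x).unique (mem_vadd_iff.1 hv) (mem_vadd_iff.1 hw)
  · obtain ⟨v, hv, -⟩ := hunique x
    exact mem_iUnion.2 ⟨-v, mem_vadd_iff.2 (by rwa [neg_neg])⟩

theorem exists_injective_norm_sub_le (L₁ L₂ : Submodule ℤ E)
    [DiscreteTopology L₁] [IsZLattice ℝ L₁] [DiscreteTopology L₂] [IsZLattice ℝ L₂]
    (hcov : covolume L₂ μ ≤ covolume L₁ μ) :
    ∃ C : ℝ, ∃ f : L₁ → L₂, Injective f ∧ ∀ x, ‖(f x : E) - x‖ ≤ C := by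
  classical
  obtain ⟨F₁, hF₁, hF₁b, hF₁μ, hdisj, -⟩ := exists_isBounded_tile μ L₁
  obtain ⟨F₂, -, hF₂b, hF₂μ, -, hcover⟩ := exists_isBounded_tile μ L₂
  obtain ⟨r₁, hr₁⟩ := hF₁b.subset_closedBall 0
  obtain ⟨r₂, hr₂⟩ := hF₂b.subset_closedBall 0
  have hnear (x : L₁) (y : L₂) (h : (((x : E) +ᵥ F₁) ∩ ((y : E) +ᵥ F₂)).Nonempty) :
      ‖(y : E) - x‖ ≤ r₁ + r₂ := by
    obtain ⟨z, hzx, hzy⟩ := h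
    rw [mem_vadd_set_iff_neg_vadd_mem, vadd_eq_add] at hzx hzy
    rw [(by abel : (y : E) - x = (-x + z) - (-y + z))]
    exact norm_sub_le_of_le (mem_closedBall_zero_iff.1 (hr₁ hzx))
      (mem_closedBall_zero_iff.1 (hr₂ hzy))
  have hfin (x : L₁) : {y : L₂ | ‖(y : E) - x‖ ≤ r₁ + r₂}.Finite :=
    (L₂.finite_preimage_coe_of_isBounded (Metric.isBounded_closedBall (x := (x : E)))).subset
      fun _ ↦ mem_closedBall_iff_norm.2
  have hF₁_top : μ F₁ ≠ ∞ := hF₁b.measure_lt_top.ne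
  have hF₁₀ : μ F₁ ≠ 0 := fun h ↦
    covolume_ne_zero L₁ μ (by rw [← hF₁μ, measureReal_def, h, ENNReal.toReal_zero])
  have hF : μ F₂ ≤ μ F₁ := (ENNReal.toReal_le_toReal hF₂b.measure_lt_top.ne hF₁_top).1
    (by rwa [← measureReal_def, ← measureReal_def, hF₁μ, hF₂μ])
  obtain ⟨f, hf, hft⟩ := (Finset.all_card_le_biUnion_card_iff_exists_injective
    fun x ↦ (hfin x).toFinset).1 fun s ↦
      card_le_card_of_pairwiseDisjoint_of_iUnion_eq_univ μ hF₁ hF₁₀ hF₁_top hF hdisj hcover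
        fun x hx y hxy ↦ Finset.mem_biUnion.2 ⟨x, hx, (hfin x).mem_toFinset.2 (hnear x y hxy)⟩
  exact ⟨r₁ + r₂, f, hf, fun x ↦ (hfin x).mem_toFinset.1 (hft x)⟩

end ZLattice

/-- Any two lattices in `ℝ^d` of the same covolume are bounded displacement equivalent:
there is a bijection between them moving each point by a uniformly bounded distance. -/
theorem lattices_same_covolume_BD (d : ℕ)
    (L₁ L₂ : Submodule ℤ (EuclideanSpace ℝ (Fin d)))
    [DiscreteTopology L₁] [IsZLattice ℝ L₁]
    [DiscreteTopology L₂] [IsZLattice ℝ L₂]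
    (hcov : ZLattice.covolume L₁ = ZLattice.covolume L₂) :
    ∃ f : L₁ ≃ L₂, ∃ C : ℝ,
      ∀ x : L₁, ‖(f x : EuclideanSpace ℝ (Fin d)) - (x : EuclideanSpace ℝ (Fin d))‖ ≤ C := by
  obtain ⟨C, f, hf, hfC⟩ := ZLattice.exists_injective_norm_sub_le volume L₁ L₂ hcov.ge
  obtain ⟨C', g, hg, hgC'⟩ := ZLattice.exists_injective_norm_sub_le volume L₂ L₁ hcov.le
  obtain ⟨e, he, heC⟩ := Embedding.schroeder_bernstein_of_rel hf hg
    (fun x y ↦ ‖(y : EuclideanSpace ℝ (Fin d)) - x‖ ≤ max C C')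
    (fun x ↦ (hfC x).trans (le_max_left _ _))
    (fun y ↦ (norm_sub_rev _ _).trans_le ((hgC' y).trans (le_max_right _ _)))
  exact ⟨Equiv.ofBijective e he, max C C', heC⟩
end

section
/- Suppose Y ⊆ ℝ^d is a separated net, λ > 0, and there exist C > 0 and δ > 0 such that for every axis-parallel cube Q of side length T ≥ 1, | #(Y ∩ Q) − λ|Q| | ≤ C T^{d−1−δ}. Then for every finite union of unit cubes 𝒞 that can be written as a disjoint-union/set-difference combination of dyadic cubes Q₁,...,Q_n with at most κ |∂𝒞|_{d−1} / 2^{j(d−1)} cubes of side length 2^j for each j ≥ 0, the discrepancy satisfies | #(Y ∩ 𝒞) − λ|𝒞| | ≤ (Cκ/(1 − 2^{−δ})) |∂𝒞|_{d−1}. -/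
open MeasureTheory

/-- Half-open axis-parallel cube with corner `a` and side `T`. -/
def cube {d : ℕ} (a : Fin d → ℝ) (T : ℝ) : Set (EuclideanSpace ℝ (Fin d)) :=
  {x | ∀ i, a i ≤ x i ∧ x i < a i + T}

/-- Dyadic cube of side `2^j` with corner coordinates the integer multiples `a i * 2^j`. -/
def dyadicCube {d : ℕ} (j : ℕ) (a : Fin d → ℤ) : Set (EuclideanSpace ℝ (Fin d)) :=
  cube (fun i => (a i : ℝ) * 2 ^ j) (2 ^ j)

/-- `SComb Q A s` : the set `A` is built from the sets `Q i`, `i ∈ s`, using disjoint unions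
and set differences, each `Q i` being used at most once. -/
inductive SComb {α : Type*} {n : ℕ} (Q : Fin n → Set α) : Set α → Finset (Fin n) → Prop
  | base (i : Fin n) : SComb Q (Q i) {i}
  | union {A B : Set α} {s t : Finset (Fin n)} : SComb Q A s → SComb Q B t →
      Disjoint s t → Disjoint A B → SComb Q (A ∪ B) (s ∪ t)
  | sdiff {A B : Set α} {s t : Finset (Fin n)} : SComb Q A s → SComb Q B t →
      Disjoint s t → B ⊆ A → SComb Q (A \ B) (s ∪ t)

/-- `Y` is a separated net in `ℝ^d`. -/
def IsSeparatedNet {d : ℕ} (Y : Set (EuclideanSpace ℝ (Fin d))) : Prop :=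
  ∃ r R : ℝ, 0 < r ∧ r < R ∧
    (∀ x ∈ Y, ∀ y ∈ Y, x ≠ y → r ≤ dist x y) ∧
    (∀ x : EuclideanSpace ℝ (Fin d), ∃ y ∈ Y, dist x y ≤ R)

/-
Discrepancy is additive under disjoint union and subtractive under nested difference, so along
the combination the discrepancy of 𝒞 is at most the sum of the
discrepancies of the dyadic cubes used. A dyadic cube of side 2^k has discrepancy at most
C 2^{k(d-1)} 2^{-kδ}, while at most κ |∂𝒞| / 2^{k(d-1)} cubes of that side occur: level k
contributes at most C κ |∂𝒞| 2^{-kδ}, and the geometric series in 2^{-δ} gives the factor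
1 / (1 - 2^{-δ}).
-/

open MeasureTheory Bornology

namespace SComb

variable {α : Type*} {n : ℕ} {Q : Fin n → Set α} {A : Set α} {s : Finset (Fin n)}

lemma finite_inter {Y : Set α} (hQ : ∀ i, (Y ∩ Q i).Finite) (h : SComb Q A s) :
    (Y ∩ A).Finite := by
  induction h with
  | base i => exact hQ i
  | union _ _ _ _ hA hB => simpa only [Set.inter_union_distrib_left] using hA.union hB
  | sdiff _ _ _ _ hA _ => exact hA.subset (Set.inter_subset_inter_right Y Set.sdiff_subset)

variable [MeasurableSpace α]

lemma measurableSet (hQ : ∀ i, MeasurableSet (Q i)) (h : SComb Q A s) : MeasurableSet A := by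
  induction h with
  | base i => exact hQ i
  | union _ _ _ _ hA hB => exact hA.union hB
  | sdiff _ _ _ _ hA hB => exact hA.diff hB

lemma measure_ne_top {μ : Measure α} (hQ : ∀ i, μ (Q i) ≠ ⊤) (h : SComb Q A s) :
    μ A ≠ ⊤ := by
  induction h with
  | base i => exact hQ i
  | union _ _ _ _ hA hB => exact measure_union_ne_top hA hB
  | sdiff _ _ _ _ hA _ => exact ne_top_of_le_ne_top hA (measure_mono Set.sdiff_subset)

end SComb

section Discrepancy

variable {α : Type*} [MeasurableSpace α] {μ : Measure α} {Y : Set α} {lam : ℝ}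

-- `ncard` is `0` on infinite sets, hence the finiteness hypotheses below.
variable (μ Y lam) in
noncomputable def discrepancy (A : Set α) : ℝ := (Y ∩ A).ncard - lam * μ.real A

lemma discrepancy_union {A B : Set α} (hAB : Disjoint A B) (hB : MeasurableSet B)
    (hAμ : μ A ≠ ⊤) (hBμ : μ B ≠ ⊤) (hYA : (Y ∩ A).Finite) (hYB : (Y ∩ B).Finite) :
    discrepancy μ Y lam (A ∪ B) = discrepancy μ Y lam A + discrepancy μ Y lam B := by
  have hcard : (Y ∩ (A ∪ B)).ncard = (Y ∩ A).ncard + (Y ∩ B).ncard := by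
    rw [Set.inter_union_distrib_left,
      Set.ncard_union_eq (hAB.mono Set.inter_subset_right Set.inter_subset_right) hYA hYB]
  simp only [discrepancy, hcard, measureReal_union hAB hB hAμ hBμ]
  push_cast
  ring

lemma discrepancy_sdiff {A B : Set α} (hBA : B ⊆ A) (hB : MeasurableSet B) (hAμ : μ A ≠ ⊤)
    (hYA : (Y ∩ A).Finite) :
    discrepancy μ Y lam (A \ B) = discrepancy μ Y lam A - discrepancy μ Y lam B := by
  simp only [discrepancy, Set.inter_sdiff_distrib_left,
    Set.cast_ncard_sdiff (Set.inter_subset_inter_right Y hBA) hYA, measureReal_sdiff hBA hB hAμ]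
  ring

namespace SComb

variable {n : ℕ} {Q : Fin n → Set α} {A : Set α} {s : Finset (Fin n)}

lemma abs_discrepancy_le_sum (hQm : ∀ i, MeasurableSet (Q i)) (hQμ : ∀ i, μ (Q i) ≠ ⊤)
    (hYQ : ∀ i, (Y ∩ Q i).Finite) (h : SComb Q A s) :
    |discrepancy μ Y lam A| ≤ ∑ i ∈ s, |discrepancy μ Y lam (Q i)| := by
  induction h with
  | base i => simp
  | union hA hB hst hAB ihA ihB =>
    rw [discrepancy_union hAB (hB.measurableSet hQm) (hA.measure_ne_top hQμ)
      (hB.measure_ne_top hQμ) (hA.finite_inter hYQ) (hB.finite_inter hYQ), Finset.sum_union hst]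
    exact (abs_add_le _ _).trans (add_le_add ihA ihB)
  | sdiff hA hB hst hBA ihA ihB =>
    rw [discrepancy_sdiff hBA (hB.measurableSet hQm) (hA.measure_ne_top hQμ)
      (hA.finite_inter hYQ), Finset.sum_union hst]
    exact (abs_sub _ _).trans (add_le_add ihA ihB)

end SComb

end Discrepancy

lemma finite_inter_of_pairwise_le_dist {X : Type*} [MetricSpace X] [ProperSpace X]
    {Y B : Set X} {r : ℝ} (hr : 0 < r) (hY : Y.Pairwise fun x y => r ≤ dist x y)
    (hB : IsBounded B) : (Y ∩ B).Finite := by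
  have hdiscrete : IsDiscrete Y := isDiscrete_iff_discreteTopology.mpr <|
    DiscreteTopology.of_forall_le_dist hr fun x y hxy => hY x.2 y.2 (Subtype.coe_ne_coe.mpr hxy)
  rw [Set.inter_comm]
  exact Metric.finite_isBounded_inter_isClosed hdiscrete hB
    (Metric.isClosed_of_pairwise_le_dist hr hY)

section Cube

variable {d : ℕ}

lemma cube_eq_preimage (a : Fin d → ℝ) (T : ℝ) :
    cube a T = (MeasurableEquiv.toLp 2 (Fin d → ℝ)).symm ⁻¹'
      (Set.univ.pi fun i => Set.Ico (a i) (a i + T)) := by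
  ext x
  simp [cube, Set.mem_pi, Set.mem_Ico]

lemma measurableSet_cube (a : Fin d → ℝ) (T : ℝ) : MeasurableSet (cube a T) := by
  rw [cube_eq_preimage]
  exact (MeasurableEquiv.toLp 2 (Fin d → ℝ)).symm.measurable
    (MeasurableSet.univ_pi fun i => measurableSet_Ico)

lemma measureReal_cube (a : Fin d → ℝ) {T : ℝ} (hT : 0 ≤ T) :
    volume.real (cube a T) = T ^ d := by
  rw [measureReal_def, cube_eq_preimage,
    (EuclideanSpace.volume_preserving_symm_measurableEquiv_toLp (Fin d)).measure_preimage
      (MeasurableSet.univ_pi fun i => measurableSet_Ico).nullMeasurableSet,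
    volume_pi_pi]
  simp [Real.volume_Ico, ENNReal.toReal_pow, ENNReal.toReal_ofReal hT]

lemma isBounded_cube (a : Fin d → ℝ) (T : ℝ) : IsBounded (cube a T) := by
  have h : cube a T ⊆ WithLp.ofLp ⁻¹' Set.Icc a fun i => a i + T :=
    fun x hx => ⟨fun i => (hx i).1, fun i => (hx i).2.le⟩
  exact ((PiLp.antilipschitzWith_ofLp 2 _).isBounded_preimage (Metric.isBounded_Icc _ _)).subset h

lemma abs_discrepancy_dyadicCube_le {Y : Set (EuclideanSpace ℝ (Fin d))} {lam C e : ℝ}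
    (hcube : ∀ (a : Fin d → ℝ) (T : ℝ), 1 ≤ T →
      |(Nat.card (Y ∩ cube a T : Set _) : ℝ) - lam * T ^ d| ≤ C * T ^ e)
    (k : ℕ) (b : Fin d → ℤ) :
    |discrepancy volume Y lam (dyadicCube k b)| ≤ C * ((2 : ℝ) ^ k) ^ e := by
  have h := hcube (fun i => (b i : ℝ) * 2 ^ k) (2 ^ k) (one_le_pow₀ one_le_two)
  rwa [Nat.card_coe_set_eq,
    ← measureReal_cube (fun i => (b i : ℝ) * 2 ^ k) (by positivity)] at h

end Cube

lemma two_pow_rpow_sub_one_sub {d : ℕ} (hd : 1 ≤ d) (k : ℕ) (δ : ℝ) :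
    ((2 : ℝ) ^ k) ^ ((d : ℝ) - 1 - δ) = 2 ^ (k * (d - 1)) * ((2 : ℝ) ^ (-δ)) ^ k := by
  rw [← Real.rpow_natCast (2 : ℝ) k, ← Real.rpow_natCast ((2 : ℝ) ^ (-δ)) k,
    ← Real.rpow_natCast (2 : ℝ) (k * (d - 1)), ← Real.rpow_mul zero_le_two,
    ← Real.rpow_mul zero_le_two, ← Real.rpow_add two_pos]
  push_cast [Nat.cast_sub hd]
  ring_nf

open Finset in
lemma sum_le_div_one_sub_of_card_fiber_mul_le {ι : Type*} [Fintype ι] (j : ι → ℕ)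
    (w : ℕ → ℝ) {c q : ℝ} (hc : 0 ≤ c) (hq0 : 0 ≤ q) (hq1 : q < 1)
    (hfiber : ∀ k, #{i | j i = k} * w k ≤ c * q ^ k) :
    ∑ i, w (j i) ≤ c / (1 - q) := by
  have hgeom : ∑ k ∈ univ.image j, q ^ k ≤ (1 - q)⁻¹ :=
    ((summable_geometric_of_lt_one hq0 hq1).sum_le_tsum _ fun k _ => pow_nonneg hq0 k).trans_eq
      (tsum_geometric_of_lt_one hq0 hq1)
  calc ∑ i, w (j i) = ∑ k ∈ univ.image j, #{i | j i = k} • w k := sum_comp w j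
    _ ≤ ∑ k ∈ univ.image j, c * q ^ k :=
        sum_le_sum fun k _ => (nsmul_eq_mul _ _).trans_le (hfiber k)
    _ = c * ∑ k ∈ univ.image j, q ^ k := (mul_sum _ _ _).symm
    _ ≤ c / (1 - q) := (mul_le_mul_of_nonneg_left hgeom hc).trans_eq (div_eq_mul_inv _ _).symm

theorem discrepancy_of_union_unit_cubes_general (d : ℕ) (hd : 1 ≤ d)
    (Y : Set (EuclideanSpace ℝ (Fin d))) (hY : IsSeparatedNet Y)
    (lam C δ κ : ℝ) (hC : 0 < C) (hδ : 0 < δ) (hκ : 0 < κ)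
    (hcube : ∀ (a : Fin d → ℝ) (T : ℝ), 1 ≤ T →
      |(Nat.card (Y ∩ cube a T : Set _) : ℝ) - lam * T ^ d| ≤ C * T ^ ((d : ℝ) - 1 - δ))
    (𝒞 : Set (EuclideanSpace ℝ (Fin d)))
    (n : ℕ) (j : Fin n → ℕ) (a : Fin n → Fin d → ℤ)
    (hcomb : ∃ s : Finset (Fin n), SComb (fun i => dyadicCube (j i) (a i)) 𝒞 s)
    (hcount : ∀ jj : ℕ,
      (((Finset.univ : Finset (Fin n)).filter (fun i => j i = jj)).card : ℝ) ≤
        κ * (μH[(d : ℝ) - 1] (frontier 𝒞)).toReal / 2 ^ (jj * (d - 1))) :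
    |(Nat.card (Y ∩ 𝒞 : Set _) : ℝ) - lam * (volume 𝒞).toReal| ≤
      (C * κ / (1 - (2 : ℝ) ^ (-δ))) * (μH[(d : ℝ) - 1] (frontier 𝒞)).toReal := by
  obtain ⟨r, -, hr, -, hsep, -⟩ := hY
  obtain ⟨s, hs⟩ := hcomb
  set M := (μH[(d : ℝ) - 1] (frontier 𝒞)).toReal
  have hq : (2 : ℝ) ^ (-δ) < 1 :=
    Real.rpow_lt_one_of_one_lt_of_neg one_lt_two (neg_neg_of_pos hδ)
  have hlevel (k : ℕ) : (Finset.univ.filter (fun i => j i = k)).card *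
      (C * ((2 : ℝ) ^ k) ^ ((d : ℝ) - 1 - δ)) ≤ C * κ * M * ((2 : ℝ) ^ (-δ)) ^ k := by
    rw [two_pow_rpow_sub_one_sub hd]
    calc _ ≤ κ * M / 2 ^ (k * (d - 1)) * (C * (2 ^ (k * (d - 1)) * ((2 : ℝ) ^ (-δ)) ^ k)) :=
          mul_le_mul_of_nonneg_right (hcount k) (by positivity)
      _ = C * κ * M * ((2 : ℝ) ^ (-δ)) ^ k := by field_simp
  rw [Nat.card_coe_set_eq]
  calc |discrepancy volume Y lam 𝒞|
      ≤ ∑ i ∈ s, |discrepancy volume Y lam (dyadicCube (j i) (a i))| :=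
        hs.abs_discrepancy_le_sum (fun _ => measurableSet_cube _ _)
          (fun _ => (isBounded_cube _ _).measure_lt_top.ne)
          (fun _ => finite_inter_of_pairwise_le_dist hr (fun x hx y hy hxy => hsep x hx y hy hxy)
            (isBounded_cube _ _))
    _ ≤ ∑ i ∈ s, C * ((2 : ℝ) ^ j i) ^ ((d : ℝ) - 1 - δ) :=
        Finset.sum_le_sum fun i _ => abs_discrepancy_dyadicCube_le hcube (j i) (a i)
    _ ≤ ∑ i, C * ((2 : ℝ) ^ j i) ^ ((d : ℝ) - 1 - δ) :=
        Finset.sum_le_sum_of_subset_of_nonneg s.subset_univ fun _ _ _ => by positivity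
    _ ≤ C * κ * M / (1 - (2 : ℝ) ^ (-δ)) :=
        sum_le_div_one_sub_of_card_fiber_mul_le j _ (by positivity) (by positivity) hq hlevel
    _ = C * κ / (1 - (2 : ℝ) ^ (-δ)) * M := by ring

/-- Quantitative cube discrepancy bounds plus Laczkovich's decomposition of a finite union of
unit cubes into dyadic cubes give a discrepancy bound linear in the boundary measure. -/
theorem discrepancy_of_union_unit_cubes (d : ℕ) (hd : 1 ≤ d)
    (Y : Set (EuclideanSpace ℝ (Fin d))) (hY : IsSeparatedNet Y)
    (lam C δ κ : ℝ) (hlam : 0 < lam) (hC : 0 < C) (hδ : 0 < δ) (hδd : δ ≤ d) (hκ : 0 < κ)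
    (hcube : ∀ (a : Fin d → ℝ) (T : ℝ), 1 ≤ T →
      |(Nat.card (Y ∩ cube a T : Set _) : ℝ) - lam * T ^ d| ≤ C * T ^ ((d : ℝ) - 1 - δ))
    (𝒞 : Set (EuclideanSpace ℝ (Fin d))) (S : Finset (Fin d → ℤ))
    (h𝒞 : 𝒞 = ⋃ a ∈ S, cube (fun i => (a i : ℝ)) 1)
    (n : ℕ) (j : Fin n → ℕ) (a : Fin n → Fin d → ℤ)
    (hcomb : ∃ s : Finset (Fin n), SComb (fun i => dyadicCube (j i) (a i)) 𝒞 s)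
    (hcount : ∀ jj : ℕ,
      (((Finset.univ : Finset (Fin n)).filter (fun i => j i = jj)).card : ℝ) ≤
        κ * (μH[(d : ℝ) - 1] (frontier 𝒞)).toReal / 2 ^ (jj * (d - 1))) :
    |(Nat.card (Y ∩ 𝒞 : Set _) : ℝ) - lam * (volume 𝒞).toReal| ≤
      (C * κ / (1 - (2 : ℝ) ^ (-δ))) * (μH[(d : ℝ) - 1] (frontier 𝒞)).toReal :=
  discrepancy_of_union_unit_cubes_general d hd Y hY lam C δ κ hC hδ hκ hcube 𝒞 n j a hcomb hcount
end

section
/- Let B = ∏_{ℓ=1}^k [−b_ℓ, b_ℓ] ⊆ ℝ^k, and for each i let c_i, C_i : ℝ → ℝ satisfy c_i(t) ≤ χ_{[−b_i,b_i]}(t) ≤ C_i(t) for all t, and assume C_j(t) ≥ 0 for all t and all j. Define G_B(x) = ∏_{j=1}^k C_j(x_j) and g_B(x) = −(k−1)G_B(x) + ∑_{i=1}^k c_i(x_i)∏_{j≠i} C_j(x_j). Then g_B(x) ≤ χ_B(x) ≤ G_B(x) for all x ∈ ℝ^k. -/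
lemma box_aux {ι : Type*} [DecidableEq ι] (β : ι → ℝ) :
    ∀ s : Finset ι, (∀ i ∈ s, 1 ≤ β i) →
    ∑ i ∈ s, ∏ j ∈ s.erase i, β j ≤ 1 + ((s.card : ℝ) - 1) * ∏ j ∈ s, β j := by
  intro s
  induction s using Finset.induction_on with
  | empty => intro _; simp
  | @insert a s ha ih =>
    intro h
    have ha1 : 1 ≤ β a := h a (Finset.mem_insert_self a s)
    have hs1 : ∀ i ∈ s, 1 ≤ β i := fun i hi => h i (Finset.mem_insert_of_mem hi)
    have hP : 1 ≤ ∏ j ∈ s, β j := by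
      have := Finset.prod_le_prod (f := fun _ => (1:ℝ)) (g := β)
        (fun i _ => zero_le_one) hs1
      simpa using this
    rw [Finset.sum_insert ha, Finset.erase_insert ha]
    have e2 : ∀ i ∈ s, ∏ j ∈ (insert a s).erase i, β j = β a * ∏ j ∈ s.erase i, β j := by
      intro i hi
      rw [Finset.erase_insert_of_ne (by rintro rfl; exact ha hi),
        Finset.prod_insert (by simp [Finset.mem_erase, ha])]
    rw [Finset.sum_congr rfl e2, ← Finset.mul_sum, Finset.prod_insert ha,
      Finset.card_insert_of_notMem ha]
    have hba : 0 ≤ β a := le_trans zero_le_one ha1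
    have key := ih hs1
    have h2 : β a * ∑ i ∈ s, ∏ j ∈ s.erase i, β j
        ≤ β a * (1 + ((s.card : ℝ) - 1) * ∏ j ∈ s, β j) := by gcongr
    push_cast
    nlinarith [hP, ha1, h2]

/-- Selberg-type majorant/minorant for a box: if `cᵢ ≤ χ_{[-bᵢ,bᵢ]} ≤ Cᵢ` with `Cᵢ ≥ 0`, then
`g_B ≤ χ_B ≤ G_B` where `G_B(x) = ∏ⱼ Cⱼ(xⱼ)` and
`g_B(x) = -(k-1) G_B(x) + ∑ᵢ cᵢ(xᵢ) ∏_{j≠i} Cⱼ(xⱼ)`. -/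
theorem box_majorant_minorant (k : ℕ) (b : Fin k → ℝ)
    (c C : Fin k → ℝ → ℝ)
    (hlow : ∀ i t, c i t ≤ Set.indicator (Set.Icc (-(b i)) (b i)) 1 t)
    (hupp : ∀ i t, Set.indicator (Set.Icc (-(b i)) (b i)) 1 t ≤ C i t)
    (hnonneg : ∀ i t, 0 ≤ C i t) :
    ∀ x : Fin k → ℝ,
      (-(((k : ℝ) - 1)) * ∏ j, C j (x j) +
          ∑ i, c i (x i) * ∏ j ∈ Finset.univ.erase i, C j (x j) ≤
        Set.indicator (Set.univ.pi fun i => Set.Icc (-(b i)) (b i)) 1 x) ∧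
      Set.indicator (Set.univ.pi fun i => Set.Icc (-(b i)) (b i)) 1 x ≤ ∏ j, C j (x j) := by
  intro x
  have hprodnn : ∀ s : Finset (Fin k), 0 ≤ ∏ j ∈ s, C j (x j) :=
    fun s => Finset.prod_nonneg fun j _ => hnonneg j (x j)
  by_cases hx : x ∈ Set.univ.pi fun i => Set.Icc (-(b i)) (b i)
  · rw [Set.indicator_of_mem hx]
    have hxi : ∀ i, x i ∈ Set.Icc (-(b i)) (b i) := fun i => hx i (Set.mem_univ i)
    have hC1 : ∀ i ∈ Finset.univ, 1 ≤ C i (x i) := by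
      intro i _
      have := hupp i (x i)
      rwa [Set.indicator_of_mem (hxi i)] at this
    constructor
    · have hsum : ∑ i, c i (x i) * ∏ j ∈ Finset.univ.erase i, C j (x j)
          ≤ ∑ i : Fin k, ∏ j ∈ Finset.univ.erase i, C j (x j) := by
        apply Finset.sum_le_sum
        intro i _
        have hc1 : c i (x i) ≤ 1 := by
          have := hlow i (x i)
          rwa [Set.indicator_of_mem (hxi i)] at this
        calc c i (x i) * ∏ j ∈ Finset.univ.erase i, C j (x j)
            ≤ 1 * ∏ j ∈ Finset.univ.erase i, C j (x j) := by
              exact mul_le_mul_of_nonneg_right hc1 (hprodnn _)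
          _ = _ := one_mul _
      have haux := box_aux (fun j => C j (x j)) Finset.univ hC1
      simp only [Finset.card_univ, Fintype.card_fin] at haux
      show _ ≤ (1 : ℝ)
      nlinarith [le_trans hsum haux]
    · rw [Pi.one_apply]
      have := Finset.prod_le_prod (f := fun _ : Fin k => (1:ℝ))
        (g := fun j => C j (x j)) (fun i _ => zero_le_one) hC1
      simpa using this
  · rw [Set.indicator_of_notMem hx]
    refine ⟨?_, hprodnn _⟩
    rw [Set.mem_univ_pi] at hx
    push_neg at hx
    obtain ⟨i0, hi0⟩ := hx
    have hc0 : c i0 (x i0) ≤ 0 := by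
      have := hlow i0 (x i0)
      rwa [Set.indicator_of_notMem hi0] at this
    have hterm : ∀ i ∈ Finset.univ.erase i0,
        c i (x i) * ∏ j ∈ Finset.univ.erase i, C j (x j) ≤ ∏ j, C j (x j) := by
      intro i _
      have hc : c i (x i) ≤ C i (x i) := le_trans (hlow i (x i)) (hupp i (x i))
      calc c i (x i) * ∏ j ∈ Finset.univ.erase i, C j (x j)
          ≤ C i (x i) * ∏ j ∈ Finset.univ.erase i, C j (x j) :=
            mul_le_mul_of_nonneg_right hc (hprodnn _)
        _ = ∏ j, C j (x j) := Finset.mul_prod_erase Finset.univ (fun j => C j (x j)) (Finset.mem_univ i)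
    have hi0term : c i0 (x i0) * ∏ j ∈ Finset.univ.erase i0, C j (x j) ≤ 0 :=
      mul_nonpos_of_nonpos_of_nonneg hc0 (hprodnn _)
    have hsum : ∑ i, c i (x i) * ∏ j ∈ Finset.univ.erase i, C j (x j)
        ≤ ((k : ℝ) - 1) * ∏ j, C j (x j) := by
      rw [← Finset.add_sum_erase _ _ (Finset.mem_univ i0)]
      have : ∑ i ∈ Finset.univ.erase i0, c i (x i) * ∏ j ∈ Finset.univ.erase i, C j (x j)
          ≤ ∑ i ∈ Finset.univ.erase i0, ∏ j, C j (x j) := Finset.sum_le_sum hterm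
      rw [Finset.sum_const, Finset.card_erase_of_mem (Finset.mem_univ i0),
        Finset.card_univ, Fintype.card_fin] at this
      have hk : 1 ≤ k := Nat.one_le_iff_ne_zero.mpr (by rintro rfl; exact i0.elim0)
      have : ((k - 1 : ℕ) : ℝ) = (k : ℝ) - 1 := by
        push_cast [hk]; ring
      nlinarith [Finset.sum_le_sum hterm, hi0term,
        (by rw [Finset.sum_const, Finset.card_erase_of_mem (Finset.mem_univ i0),
          Finset.card_univ, Fintype.card_fin, nsmul_eq_mul, this] :
          ∑ _i ∈ Finset.univ.erase i0, ∏ j, C j (x j) = ((k:ℝ)-1) * ∏ j, C j (x j))]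
    linarith
end
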